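/- arXiv:1805.09709 — 8 statements merged into one kernel-verified Lean document; each statement's English description precedes it below -/
import Mathlib

section
/- Every rational number y admits a unique expression as a negative continued fraction y = a_0 − 1/(a_1 − 1/(⋯ − 1/a_n)) where the a_i are integers with a_i ≥ 2 for i ≥ 1. -/
/-!
The leading coefficient is recovered as `a₀ = ⌈y⌉`: when all later coefficients are `≥ 2`, every
tail `a₁ − 1/(a₂ − ⋯)` exceeds `1`, so `y` lies in `(a₀ − 1, a₀]`, with equality exactly when the
expansion stops at `a₀`. This gives uniqueness by induction on the length. For existence, a
non-integral `y` is written `y = ⌈y⌉ − 1/w` with `w = (⌈y⌉ − y)⁻¹ > 1`, and `w` has a smaller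
denominator than `y`, so strong induction on the denominator applies.
-/

/-- Value of the negative continued fraction `[a; l] = a − 1/(l₀ − 1/(l₁ − ⋯))`. -/
def ncfVal : ℤ → List ℤ → ℚ
  | a, [] => (a : ℚ)
  | a, b :: l => (a : ℚ) - 1 / ncfVal b l

theorem Rat.den_inv_lt_den {q : ℚ} (h0 : 0 < q) (h1 : q < 1) : q⁻¹.den < q.den := by
  have hnum : q.num < q.den := Rat.num_lt_denom_iff.mpr h1
  rw [Rat.den_inv_of_ne_zero h0.ne']
  have := Rat.num_pos.mpr h0
  omega

theorem one_lt_ncfVal {b : ℤ} {l : List ℤ} (hb : 2 ≤ b) (hl : ∀ x ∈ l, 2 ≤ x) :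
    1 < ncfVal b l := by
  induction l generalizing b with
  | nil =>
    rw [ncfVal]
    exact_mod_cast hb.trans_lt' one_lt_two
  | cons c l ih =>
    obtain ⟨hc, hl⟩ := List.forall_mem_cons.mp hl
    have h := ih hc hl
    have hinv : 1 / ncfVal c l < 1 := (div_lt_one (one_pos.trans h)).mpr h
    have hb' : (2 : ℚ) ≤ b := by exact_mod_cast hb
    rw [ncfVal]
    linarith

theorem ncfVal_cons_mem_Ioo {a b : ℤ} {l : List ℤ} (hl : ∀ x ∈ b :: l, 2 ≤ x) :
    ncfVal a (b :: l) ∈ Set.Ioo ((a : ℚ) - 1) a := by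
  obtain ⟨hb, hl⟩ := List.forall_mem_cons.mp hl
  have h := one_lt_ncfVal hb hl
  have hinv : 1 / ncfVal b l < 1 := (div_lt_one (one_pos.trans h)).mpr h
  have hpos : 0 < 1 / ncfVal b l := one_div_pos.mpr (one_pos.trans h)
  rw [ncfVal]
  constructor <;> linarith

theorem ceil_ncfVal (a : ℤ) {l : List ℤ} (hl : ∀ x ∈ l, 2 ≤ x) : ⌈ncfVal a l⌉ = a := by
  rw [Int.ceil_eq_iff]
  cases l with
  | nil => simp [ncfVal]
  | cons b l => exact ⟨(ncfVal_cons_mem_Ioo hl).1, (ncfVal_cons_mem_Ioo hl).2.le⟩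

theorem eq_of_ncfVal_eq {a a' : ℤ} {l l' : List ℤ} (hl : ∀ x ∈ l, 2 ≤ x)
    (hl' : ∀ x ∈ l', 2 ≤ x) (h : ncfVal a l = ncfVal a' l') : a = a' ∧ l = l' := by
  have ha : a = a' := by rw [← ceil_ncfVal a hl, ← ceil_ncfVal a' hl', h]
  subst ha
  refine ⟨rfl, ?_⟩
  match l, l', hl, hl', h with
  | [], [], _, _, _ => rfl
  | [], _ :: _, _, hl', h => exact absurd h (ncfVal_cons_mem_Ioo hl').2.ne'
  | _ :: _, [], hl, _, h => exact absurd h (ncfVal_cons_mem_Ioo hl).2.ne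
  | b :: m, b' :: m', hl, hl', h =>
    have htail : ncfVal b m = ncfVal b' m' := by
      simpa only [ncfVal, sub_right_inj, one_div, inv_inj] using h
    obtain ⟨rfl, rfl⟩ :=
      eq_of_ncfVal_eq (List.forall_mem_cons.mp hl).2 (List.forall_mem_cons.mp hl').2 htail
    rfl

theorem exists_ncfVal_eq (y : ℚ) : ∃ a l, (∀ x ∈ l, 2 ≤ x) ∧ ncfVal a l = y := by
  induction hn : y.den using Nat.strong_induction_on generalizing y with
  | _ n ih =>
  by_cases hy : y.den = 1
  · exact ⟨y.num, [], by simp, (Rat.den_eq_one_iff y).mp hy⟩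
  set z : ℚ := ⌈y⌉ - y with hz
  have hz0 : 0 < z := by
    refine sub_pos.mpr ((Int.le_ceil y).lt_of_ne fun h ↦ hy ?_)
    rw [h, Rat.den_intCast]
  have hz1 : z < 1 := by linarith [Int.ceil_lt_add_one y]
  have hden : z⁻¹.den < n := by
    rw [← hn, ← Rat.intCast_sub_den ⌈y⌉ y]
    exact Rat.den_inv_lt_den hz0 hz1
  obtain ⟨b, m, hm, hbm⟩ := ih _ hden z⁻¹ rfl
  have hb : 2 ≤ b := by
    have : 1 < ⌈z⁻¹⌉ := Int.lt_ceil.mpr (by exact_mod_cast (one_lt_inv₀ hz0).mpr hz1)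
    rw [← hbm, ceil_ncfVal b hm] at this
    omega
  refine ⟨⌈y⌉, b :: m, List.forall_mem_cons.mpr ⟨hb, hm⟩, ?_⟩
  rw [ncfVal, hbm, one_div, inv_inv, hz]
  ring

/-- Every rational number `y` admits a unique expression as a
negative continued fraction `y = a₀ − 1/(a₁ − 1/(⋯ − 1/aₙ))` where the `aᵢ`
are integers with `aᵢ ≥ 2` for `i ≥ 1`. -/
theorem stmt6 (y : ℚ) :
    ∃! al : ℤ × List ℤ, (∀ b ∈ al.2, 2 ≤ b) ∧ ncfVal al.1 al.2 = y := by
  obtain ⟨a, l, hl, rfl⟩ := exists_ncfVal_eq y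
  refine ⟨(a, l), ⟨hl, rfl⟩, ?_⟩
  rintro ⟨a', l'⟩ ⟨hl', hv⟩
  obtain ⟨rfl, rfl⟩ := eq_of_ncfVal_eq hl' hl hv
  rfl
end

section
/- If b_i/c_i and b_j/c_j are convergents (in lowest terms) of the negative continued fraction expansion of a rational y with j ≥ i+2, then b_i/c_i − b_j/c_j > 1/(c_i c_j). -/
/-- The `i`-th convergent `[a₀, a₁, …, aᵢ]` of the negative continued fraction
with partial quotients `a 0, a 1, a 2, …`. -/
def ncfConv (a : ℕ → ℤ) (i : ℕ) : ℚ := ncfVal (a 0) ((List.range' 1 i).map a)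

/-- If `bᵢ/cᵢ` and `bⱼ/cⱼ` are convergents (in lowest terms,
given by the standard recursion) of the negative continued fraction expansion
`[a₀, …, aₙ]` of a rational `y`, and `j ≥ i + 2`, then
`bᵢ/cᵢ − bⱼ/cⱼ > 1/(cᵢ cⱼ)`. -/
theorem stmt9 (a : ℕ → ℤ) (n : ℕ) (ha : ∀ i, 1 ≤ i → i ≤ n → 2 ≤ a i)
    (b c : ℕ → ℤ)
    (hb0 : b 0 = a 0) (hc0 : c 0 = 1)
    (hb1 : b 1 = a 0 * a 1 - 1) (hc1 : c 1 = a 1)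
    (hbrec : ∀ i, i + 2 ≤ n → b (i + 2) = a (i + 2) * b (i + 1) - b i)
    (hcrec : ∀ i, i + 2 ≤ n → c (i + 2) = a (i + 2) * c (i + 1) - c i)
    (i j : ℕ) (hij : i + 2 ≤ j) (hj : j ≤ n) :
    1 / ((c i : ℚ) * (c j : ℚ)) < (b i : ℚ) / (c i : ℚ) - (b j : ℚ) / (c j : ℚ) := by
  -- positivity and monotonicity of c
  have key : ∀ k, k + 1 ≤ n → 1 ≤ c k ∧ c k < c (k + 1) := by
    intro k
    induction k with
    | zero =>
      intro h
      have := ha 1 le_rfl h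
      constructor
      · simp [hc0]
      · rw [hc0, hc1]; omega
    | succ k ih =>
      intro h
      obtain ⟨h1, h2⟩ := ih (by omega)
      have h1' : 1 ≤ c (k + 1) := by omega
      refine ⟨h1', ?_⟩
      have hrec := hcrec k h
      have ha' := ha (k + 2) (by omega) h
      nlinarith
  have cpos : ∀ k, k ≤ n → (1 : ℤ) ≤ c k := by
    intro k hk
    rcases Nat.lt_or_ge k n with h | h
    · exact (key k (by omega)).1
    · have hkn : k = n := by omega
      subst hkn
      rcases Nat.eq_zero_or_pos k with h0 | h0
      · subst h0; simp [hc0]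
      · obtain ⟨m, rfl⟩ : ∃ m, k = m + 1 := ⟨k - 1, by omega⟩
        obtain ⟨h1, h2⟩ := key m (by omega)
        omega
  have det : ∀ k, k + 1 ≤ n → b k * c (k + 1) - b (k + 1) * c k = 1 := by
    intro k
    induction k with
    | zero =>
      intro h
      rw [hb0, hb1, hc0, hc1]; ring
    | succ k ih =>
      intro h
      have hprev := ih (by omega)
      rw [hbrec k h, hcrec k h]
      linear_combination hprev
  have cQpos : ∀ k, k ≤ n → (0 : ℚ) < (c k : ℚ) := by
    intro k hk
    exact_mod_cast lt_of_lt_of_le zero_lt_one (cpos k hk)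
  have diff : ∀ k, k + 1 ≤ n →
      (b k : ℚ) / (c k : ℚ) - (b (k + 1) : ℚ) / (c (k + 1) : ℚ)
        = 1 / ((c k : ℚ) * (c (k + 1) : ℚ)) := by
    intro k hk
    have h1 := cQpos k (by omega)
    have h2 := cQpos (k + 1) hk
    have hd : ((b k * c (k + 1) - b (k + 1) * c k : ℤ) : ℚ) = 1 := by
      exact_mod_cast congrArg (Int.cast : ℤ → ℚ) (det k hk)
    push_cast at hd
    field_simp
    linear_combination hd
  have P : ∀ j, i + 1 ≤ j → j ≤ n →
      1 / ((c i : ℚ) * (c j : ℚ)) ≤ (b i : ℚ) / (c i : ℚ) - (b j : ℚ) / (c j : ℚ) := by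
    intro j hj
    induction j, hj using Nat.le_induction with
    | base => intro hn; rw [diff i hn]
    | succ j hj ih =>
      intro hn
      have h1 := ih (by omega)
      have hd := diff j hn
      have hci := cQpos i (by omega)
      have hcj := cQpos j (by omega)
      have hcj1 := cQpos (j + 1) hn
      have hmono : (c j : ℚ) ≤ (c (j + 1) : ℚ) := by
        exact_mod_cast (key j hn).2.le
      have hle : 1 / ((c i : ℚ) * (c (j + 1) : ℚ)) ≤ 1 / ((c i : ℚ) * (c j : ℚ)) := by
        gcongr
      have hpos : 0 < 1 / ((c j : ℚ) * (c (j + 1) : ℚ)) := by positivity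
      linarith
  -- final step
  obtain ⟨m, rfl⟩ : ∃ m, j = m + 1 := ⟨j - 1, by omega⟩
  have hm : i + 1 ≤ m := by omega
  have hP := P m hm (by omega)
  have hd := diff m hj
  have hci := cQpos i (by omega)
  have hcm := cQpos m (by omega)
  have hcm1 := cQpos (m + 1) hj
  have hmono : (c m : ℚ) < (c (m + 1) : ℚ) := by
    exact_mod_cast (key m hj).2
  have hlt : 1 / ((c i : ℚ) * (c (m + 1) : ℚ)) < 1 / ((c i : ℚ) * (c m : ℚ)) := by
    gcongr
  have hpos : 0 < 1 / ((c m : ℚ) * (c (m + 1) : ℚ)) := by positivity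
  linarith
end

section
/- A sequence a = b_0/c_0 > b_1/c_1 > ⋯ > b_n/c_n = a' (fractions in lowest terms) is a shortest 1-path from a to a' if and only if the sequence a/N = b_0/(Nc_0) > ⋯ > b_n/(Nc_n) = a'/N is a shortest N-path from a/N to a'/N. -/
/-!
Although `(q / N).den` need not be `N · q.den`, always `lcm(N, (q / N).den) = N · q.den`, so the
`N`-path step condition between `x / N` and `y / N` is the `1`-path step condition between `x`
and `y`, divided by `N`. Hence `· / N` is a bijection between `1`-paths and `N`-paths that
commutes with taking sublists, and so it preserves minimality.
-/
/-- An `N`-path is a strictly decreasing sequence of rationals (automatically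
in lowest terms, as elements of `ℚ`) such that consecutive entries `x > y`
satisfy `x − y = N / (lcm(N, x.den) · lcm(N, y.den))`. -/
def IsNPath (N : ℕ) (l : List ℚ) : Prop :=
  l.Chain' fun x y => y < x ∧
    x - y = (N : ℚ) / ((Nat.lcm N x.den : ℚ) * (Nat.lcm N y.den : ℚ))

/-- An `N`-path from `a` to `a'`: an `N`-path whose first entry is `a` and
whose last entry is `a'`. -/
def IsNPathFrom (N : ℕ) (a a' : ℚ) (l : List ℚ) : Prop :=
  IsNPath N l ∧ l.head? = some a ∧ l.getLast? = some a'

/-- A shortest `N`-path from `a` to `a'`: an `N`-path from `a` to `a'` such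
that no proper subsequence (containing the endpoints) is an `N`-path from `a`
to `a'`. -/
def IsShortestNPath (N : ℕ) (a a' : ℚ) (l : List ℚ) : Prop :=
  IsNPathFrom N a a' l ∧
    ∀ l' : List ℚ, l'.Sublist l → l' ≠ l → ¬ IsNPathFrom N a a' l'

open Function

section SublistMinimal

variable {α β : Type*}

def SublistMinimal (P : List α → Prop) (l : List α) : Prop :=
  P l ∧ ∀ t, t.Sublist l → t ≠ l → ¬ P t

theorem sublistMinimal_map_iff {f : α → β} (hf : Injective f) {P : List α → Prop}
    {Q : List β → Prop} (hPQ : ∀ t, P t ↔ Q (t.map f)) (l : List α) :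
    SublistMinimal P l ↔ SublistMinimal Q (l.map f) := by
  refine and_congr (hPQ l) ⟨fun hmin m hm hne hQ => ?_, fun hmin t ht hne hP => ?_⟩
  · obtain ⟨t, ht, rfl⟩ := List.sublist_map_iff.mp hm
    exact hmin t ht (fun h => hne (h ▸ rfl)) ((hPQ t).mpr hQ)
  · exact hmin _ (ht.map f) (fun h => hne (List.map_injective_iff.mpr hf h)) ((hPQ t).mp hP)

end SublistMinimal

theorem Rat.den_natCast_mul (n : ℕ) (q : ℚ) : ((n : ℚ) * q).den = q.den / n.gcd q.den := by
  rw [Rat.mul_den, Rat.den_natCast, Rat.num_natCast, one_mul, Int.natAbs_mul, Int.natAbs_natCast,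
    Nat.Coprime.gcd_mul_right_cancel n q.reduced]

theorem Nat.lcm_den_div_natCast {n : ℕ} (hn : n ≠ 0) (q : ℚ) :
    n.lcm (q / n).den = n * q.den := by
  have hq : q.den = (q / n).den / n.gcd (q / n).den := by
    rw [← Rat.den_natCast_mul, mul_div_cancel₀ q (Nat.cast_ne_zero.mpr hn)]
  rw [Nat.lcm, hq, Nat.mul_div_assoc _ (Nat.gcd_dvd_right _ _)]

theorem div_left_injective₀ {G₀ : Type*} [GroupWithZero G₀] {b : G₀} (hb : b ≠ 0) :
    Injective fun a : G₀ => a / b :=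
  fun _ _ => (div_left_inj' hb).mp

def IsNStep (N : ℕ) (x y : ℚ) : Prop :=
  y < x ∧ x - y = (N : ℚ) / ((Nat.lcm N x.den : ℚ) * (Nat.lcm N y.den : ℚ))

theorem isNPath_iff_isChain (N : ℕ) (l : List ℚ) : IsNPath N l ↔ l.IsChain (IsNStep N) :=
  Iff.rfl

theorem isNStep_one_iff_div {N : ℕ} (hN : N ≠ 0) (x y : ℚ) :
    IsNStep 1 x y ↔ IsNStep N (x / N) (y / N) := by
  have hN' : (0 : ℚ) < N := Nat.cast_pos.mpr (Nat.pos_of_ne_zero hN)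
  have hscale : (N : ℚ) / ((N * x.den : ℕ) * (N * y.den : ℕ) : ℚ) = 1 / (x.den * y.den) / N := by
    push_cast
    field_simp
  rw [IsNStep, IsNStep, Nat.lcm_den_div_natCast hN, Nat.lcm_den_div_natCast hN, Nat.lcm_one_left,
    Nat.lcm_one_left, Nat.cast_one, div_lt_div_iff_of_pos_right hN', ← sub_div, hscale,
    div_left_inj' hN'.ne']

theorem isNPathFrom_one_iff_map_div {N : ℕ} (hN : N ≠ 0) (a a' : ℚ) (l : List ℚ) :
    IsNPathFrom 1 a a' l ↔ IsNPathFrom N (a / N) (a' / N) (l.map (· / (N : ℚ))) := by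
  have hf := div_left_injective₀ (Nat.cast_ne_zero.mpr hN : (N : ℚ) ≠ 0)
  rw [IsNPathFrom, IsNPathFrom, isNPath_iff_isChain, isNPath_iff_isChain, List.isChain_map,
    List.head?_map, List.getLast?_map, ← Option.map_some (f := (· / (N : ℚ))) (a := a),
    ← Option.map_some (f := (· / (N : ℚ))) (a := a'),
    (Option.map_injective hf).eq_iff, (Option.map_injective hf).eq_iff]
  exact and_congr_left' (List.IsChain.iff (isNStep_one_iff_div hN))

theorem stmt11_general (N : ℕ) (hN : 0 < N) (a a' : ℚ)
    (l : List ℚ) :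
    IsShortestNPath 1 a a' l ↔
      IsShortestNPath N (a / N) (a' / N) (l.map (· / (N : ℚ))) :=
  sublistMinimal_map_iff (div_left_injective₀ (Nat.cast_ne_zero.mpr hN.ne'))
    (isNPathFrom_one_iff_map_div hN.ne' a a') l

/-- A sequence `a = b₀/c₀ > b₁/c₁ > ⋯ > bₙ/cₙ = a'`
(fractions in lowest terms) is a shortest `1`-path from `a` to `a'` if and
only if the sequence `a/N = b₀/(Nc₀) > ⋯ > bₙ/(Ncₙ) = a'/N` is a shortest
`N`-path from `a/N` to `a'/N`. -/
theorem stmt11 (N : ℕ) (hN : 0 < N) (a a' : ℚ) (h : a' < a) (h0 : 0 ≤ a')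
    (l : List ℚ) :
    IsShortestNPath 1 a a' l ↔
      IsShortestNPath N (a / N) (a' / N) (l.map (· / (N : ℚ))) :=
  stmt11_general N hN a a' l
end

section
/- Reversing the order of a shortest 1-path from a to a' (where a > a' > 0) and replacing each entry by its reciprocal yields the shortest 1-path from 1/a' to 1/a. -/
/-
If `x = p/q > y = r/s` are positive with `x - y = 1/(qs)`, then
`1/y - 1/x = (x - y)/(xy) = 1/(pr)`, and `p, r` are the denominators of `1/x, 1/y`: inversion
maps Farey steps to Farey steps with the order reversed. Since a `1`-path ending at `a' > 0` has
positive entries, reversing and inverting is an involution carrying `1`-paths from `a` to `a'` to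
`1`-paths from `1/a'` to `1/a`, compatibly with taking subsequences; hence it preserves being
shortest.
-/

def IsFareyStep (x y : ℚ) : Prop :=
  y < x ∧ x - y = 1 / ((x.den : ℚ) * (y.den : ℚ))

lemma isNPath_one_iff (l : List ℚ) : IsNPath 1 l ↔ l.IsChain IsFareyStep := by
  simp only [IsNPath, Nat.lcm_one_left, Nat.cast_one]
  rfl

lemma Rat.den_inv_of_pos {x : ℚ} (hx : 0 < x) : ((x⁻¹).den : ℚ) = x.num := by
  rw [Rat.den_inv_of_ne_zero hx.ne', Nat.cast_natAbs, Int.cast_abs,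
    abs_of_pos (by exact_mod_cast Rat.num_pos.mpr hx)]

lemma IsFareyStep.inv {x y : ℚ} (hy : 0 < y) (h : IsFareyStep x y) : IsFareyStep y⁻¹ x⁻¹ := by
  obtain ⟨hlt, hdiff⟩ := h
  have hx : 0 < x := hy.trans hlt
  refine ⟨inv_strictAnti₀ hy hlt, ?_⟩
  have hxd : (x.den : ℚ) ≠ 0 := by positivity
  have hyd : (y.den : ℚ) ≠ 0 := by positivity
  calc y⁻¹ - x⁻¹ = (x - y) / (x * y) := by field_simp
    _ = 1 / ((x * x.den) * (y * y.den)) := by rw [hdiff]; field_simp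
    _ = 1 / (((y⁻¹).den : ℚ) * ((x⁻¹).den : ℚ)) := by
      rw [Rat.den_inv_of_pos hx, Rat.den_inv_of_pos hy, ← Rat.mul_den_eq_num,
        ← Rat.mul_den_eq_num, mul_comm (y * _)]

lemma IsNPath.pos_of_getLast? {N : ℕ} {l : List ℚ} {b : ℚ} (h : IsNPath N l)
    (hlast : l.getLast? = some b) (hb : 0 < b) : ∀ x ∈ l, 0 < x :=
  List.IsChain.backwards_induction (0 < ·) l h (fun _ _ hxy hy => hy.trans hxy.1)
    (fun hl => by rw [List.getLast?_eq_some_getLast hl, Option.some_inj] at hlast; rwa [hlast])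

lemma List.map_inv_reverse_involutive {α : Type*} [InvolutiveInv α] :
    Function.Involutive fun l : List α => (l.map (·⁻¹)).reverse := by
  intro l
  simp [← List.map_reverse]

lemma IsNPath.one_map_inv_reverse {l : List ℚ} (hpos : ∀ x ∈ l, 0 < x) (h : IsNPath 1 l) :
    IsNPath 1 (l.map (·⁻¹)).reverse := by
  rw [isNPath_one_iff] at h ⊢
  rw [List.isChain_reverse, List.isChain_map]
  induction h with
  | nil => exact .nil
  | singleton x => exact .singleton _
  | cons_cons hxy _ ih =>
    exact .cons_cons (hxy.inv (hpos _ (by simp))) (ih fun z hz => hpos z (by simp_all))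

lemma IsNPathFrom.one_map_inv_reverse {a a' : ℚ} {l : List ℚ} (hpos : ∀ x ∈ l, 0 < x)
    (h : IsNPathFrom 1 a a' l) : IsNPathFrom 1 a'⁻¹ a⁻¹ (l.map (·⁻¹)).reverse := by
  obtain ⟨hpath, hhead, hlast⟩ := h
  exact ⟨hpath.one_map_inv_reverse hpos, by simp [hlast], by simp [hhead]⟩

lemma IsShortestNPath.one_map_inv_reverse {a a' : ℚ} {l : List ℚ} (hpos : ∀ x ∈ l, 0 < x)
    (h : IsShortestNPath 1 a a' l) : IsShortestNPath 1 a'⁻¹ a⁻¹ (l.map (·⁻¹)).reverse := by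
  obtain ⟨hfrom, hmin⟩ := h
  refine ⟨hfrom.one_map_inv_reverse hpos, fun l' hsub hne hfrom' => ?_⟩
  have hpos' : ∀ x ∈ l', 0 < x := fun x hx => by
    obtain ⟨z, hz, rfl⟩ := List.mem_map.mp (List.mem_reverse.mp (hsub.subset hx))
    exact inv_pos.mpr (hpos z hz)
  have hsub' : ((l'.map (·⁻¹)).reverse).Sublist l := by
    simpa only [List.map_inv_reverse_involutive l] using (hsub.map (·⁻¹)).reverse
  have hne' : (l'.map (·⁻¹)).reverse ≠ l := fun heq =>
    hne (by rw [← heq]; exact (List.map_inv_reverse_involutive l').symm)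
  have hfrom'' := hfrom'.one_map_inv_reverse hpos'
  rw [inv_inv, inv_inv] at hfrom''
  exact hmin _ hsub' hne' hfrom''

theorem stmt13_general (a a' : ℚ) (h0 : 0 < a')
    (l : List ℚ) (hl : IsShortestNPath 1 a a' l) :
    IsShortestNPath 1 a'⁻¹ a⁻¹ ((l.map (·⁻¹)).reverse) := by
  have hpos : ∀ x ∈ l, 0 < x := hl.1.1.pos_of_getLast? hl.1.2.2 h0
  exact hl.one_map_inv_reverse hpos

/-- Reversing the order of a shortest `1`-path from `a` to
`a'` (where `a > a' > 0`) and replacing each entry by its reciprocal yields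
the shortest `1`-path from `1/a'` to `1/a`. -/
theorem stmt13 (a a' : ℚ) (h : a' < a) (h0 : 0 < a')
    (l : List ℚ) (hl : IsShortestNPath 1 a a' l) :
    IsShortestNPath 1 a'⁻¹ a⁻¹ ((l.map (·⁻¹)).reverse) :=
  stmt13_general a a' h0 l hl
end

section
/- For a positive rational a ∉ ℤ, the shortest 1-path from ⌈a⌉ to a is given by the sequence of successive convergents of the negative continued fraction expansion of a. -/
/-- Since `u (k + 2) - u (k + 1) ≥ u (k + 1) - u k` while `u` stays nonnegative, the increments
never drop below `u 1 - u 0 ≥ 1`. -/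
theorem add_le_of_two_le_of_recurrence {u c : ℕ → ℤ} (hc : ∀ k, 2 ≤ c k)
    (hrec : ∀ k, u (k + 2) = c k * u (k + 1) - u k) (h0 : 0 ≤ u 0) (h01 : u 0 < u 1) (k : ℕ) :
    u 0 + k ≤ u k := by
  have key : ∀ k, 0 ≤ u k ∧ u k + 1 ≤ u (k + 1) ∧ u 0 + k ≤ u k := by
    intro k
    induction k with
    | zero => exact ⟨h0, h01, by simp⟩
    | succ k ih =>
      obtain ⟨hk, hstep, hlow⟩ := ih
      refine ⟨by linarith, ?_, by push_cast; linarith⟩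
      have : 0 ≤ (c k - 2) * u (k + 1) := mul_nonneg (by linarith [hc k]) (by linarith)
      linarith [hrec k]
  exact (key k).2.2

theorem List.eq_range'_of_isChain_succ :
    ∀ {s : List ℕ} {i : ℕ}, s.IsChain (fun j k => k = j + 1) → s.head? = some i →
      s = List.range' i s.length
  | [], _, _, h => by simp at h
  | [j], _, _, h => by simp_all
  | j :: k :: t, i, hchain, hhead => by
    obtain ⟨rfl, htail⟩ := List.isChain_cons_cons.mp hchain
    obtain rfl : j = i := by simpa using hhead
    rw [List.length_cons, List.range'_succ, ← eq_range'_of_isChain_succ htail rfl]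

/-- `continuant a k` is the continuant `K(a₀, …, a_{k-1})` of the first `k` terms for negative
continued fractions; the `k`-th convergent is
`ncfNum a k / ncfDen a k = K(a₀, …, a_k) / K(a₁, …, a_k)`. -/
def continuant (a : ℕ → ℤ) : ℕ → ℤ
  | 0 => 1
  | 1 => a 0
  | k + 2 => a (k + 1) * continuant a (k + 1) - continuant a k

theorem continuant_add_two (a : ℕ → ℤ) (k : ℕ) :
    continuant a (k + 2) = a (k + 1) * continuant a (k + 1) - continuant a k := rfl

theorem continuant_add_two_eq_front (a : ℕ → ℤ) (m : ℕ) :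
    continuant a (m + 2) =
      a 0 * continuant (fun i => a (i + 1)) (m + 1) - continuant (fun i => a (i + 2)) m := by
  induction m using Nat.twoStepInduction with
  | zero => simp only [continuant]; ring
  | one => simp only [continuant]; ring
  | more m ih₀ ih₁ =>
    rw [continuant_add_two, ih₀, ih₁, continuant_add_two (fun i => a (i + 1)) (m + 1),
      continuant_add_two (fun i => a (i + 2)) m]
    ring

theorem add_one_le_continuant {b : ℕ → ℤ} (hb : ∀ i, 2 ≤ b i) (k : ℕ) :
    k + 1 ≤ continuant b k := by
  have := add_le_of_two_le_of_recurrence (u := continuant b) (c := fun k => b (k + 1))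
    (fun k => hb (k + 1)) (fun k => rfl) zero_le_one
    (show (1 : ℤ) < b 0 by linarith [hb 0]) k
  simp only [continuant] at this
  linarith

def ncfNum (a : ℕ → ℤ) (k : ℕ) : ℤ := continuant a (k + 1)

def ncfDen (a : ℕ → ℤ) (k : ℕ) : ℤ := continuant (fun i => a (i + 1)) k

def ncfDet (a : ℕ → ℤ) (j k : ℕ) : ℤ := ncfNum a j * ncfDen a k - ncfNum a k * ncfDen a j

theorem ncfConv_succ (a : ℕ → ℤ) (k : ℕ) :
    ncfConv a (k + 1) = a 0 - 1 / ncfConv (fun i => a (i + 1)) k := by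
  simp only [ncfConv, List.range'_succ, List.map_cons, ncfVal]
  congr 3
  rw [← List.map_add_range', List.map_map]
  simp only [Function.comp_def, add_comm]

theorem ncfConv_congr {a b : ℕ → ℤ} {k : ℕ} (h : ∀ i ≤ k, a i = b i) :
    ncfConv a k = ncfConv b k := by
  rw [ncfConv, ncfConv, h 0 (Nat.zero_le k)]
  congr 1
  refine List.map_congr_left fun i hi => h i ?_
  rw [List.mem_range'_1] at hi
  omega

theorem ncfDet_succ (a : ℕ → ℤ) (j : ℕ) : ncfDet a j (j + 1) = 1 := by
  induction j with
  | zero => simp only [ncfDet, ncfNum, ncfDen, continuant]; ring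
  | succ j ih =>
    simp only [ncfDet, ncfNum, ncfDen] at ih ⊢
    rw [continuant_add_two a (j + 1), continuant_add_two (fun i => a (i + 1)) j]
    linear_combination ih

theorem ncfDet_add_two (a : ℕ → ℤ) (j k : ℕ) :
    ncfDet a j (k + 2) = a (k + 2) * ncfDet a j (k + 1) - ncfDet a j k := by
  simp only [ncfDet, ncfNum, ncfDen]
  rw [continuant_add_two a (k + 1), continuant_add_two (fun i => a (i + 1)) k]
  ring

section

variable {a : ℕ → ℤ} (ha : ∀ i, 2 ≤ a (i + 1))
include ha

theorem ncfDen_pos (k : ℕ) : 0 < ncfDen a k := by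
  have := add_one_le_continuant (b := fun i => a (i + 1)) ha k
  rw [ncfDen]
  omega

theorem ncfConv_eq_div (k : ℕ) : ncfConv a k = ncfNum a k / ncfDen a k := by
  induction k generalizing a with
  | zero => simp [ncfConv, ncfVal, ncfNum, ncfDen, continuant]
  | succ k ih =>
    have hden : (ncfDen a (k + 1) : ℚ) ≠ 0 := by exact_mod_cast (ncfDen_pos ha (k + 1)).ne'
    rw [ncfConv_succ, ih fun i => ha (i + 1)]
    simp only [ncfNum, ncfDen] at hden ⊢
    rw [continuant_add_two_eq_front]
    field_simp
    push_cast
    ring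

theorem add_le_ncfDet (j m : ℕ) : (m : ℤ) ≤ ncfDet a j (j + m) := by
  have := add_le_of_two_le_of_recurrence (u := fun m => ncfDet a j (j + m))
    (c := fun m => a (j + m + 2)) (fun m => ha _) (fun m => ncfDet_add_two a j (j + m))
    (by simp [ncfDet]) (by simp only [add_zero, ncfDet_succ]; simp [ncfDet]) m
  simpa [ncfDet] using this

theorem ncfDet_eq_one_iff {j k : ℕ} : ncfDet a j k = 1 ↔ k = j + 1 := by
  refine ⟨fun h => ?_, by rintro rfl; exact ncfDet_succ a j⟩
  rcases le_or_gt k j with hkj | hjk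
  · obtain ⟨m, rfl⟩ := Nat.exists_eq_add_of_le hkj
    have := add_le_ncfDet ha k m
    simp only [ncfDet] at h this
    omega
  · obtain ⟨m, rfl⟩ := Nat.exists_eq_add_of_lt hjk
    have := add_le_ncfDet ha j (m + 1)
    rw [← add_assoc] at this
    omega

theorem den_ncfConv (k : ℕ) : ((ncfConv a k).den : ℤ) = ncfDen a k := by
  have hcop : IsCoprime (ncfNum a k) (ncfDen a k) :=
    ⟨ncfDen a (k + 1), -ncfNum a (k + 1), by rw [← ncfDet_succ a k, ncfDet]; ring⟩
  rw [ncfConv_eq_div ha]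
  exact Rat.den_div_eq_of_coprime (ncfDen_pos ha k) (Int.isCoprime_iff_gcd_eq_one.mp hcop)

theorem ncfConv_sub (j k : ℕ) :
    ncfConv a j - ncfConv a k = ncfDet a j k / (ncfDen a j * ncfDen a k) := by
  have hj : (ncfDen a j : ℚ) ≠ 0 := by exact_mod_cast (ncfDen_pos ha j).ne'
  have hk : (ncfDen a k : ℚ) ≠ 0 := by exact_mod_cast (ncfDen_pos ha k).ne'
  rw [ncfConv_eq_div ha, ncfConv_eq_div ha, ncfDet]
  field_simp
  push_cast
  ring

theorem ncfConv_strictAnti : StrictAnti (ncfConv a) := by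
  intro j k hjk
  obtain ⟨m, rfl⟩ := Nat.exists_eq_add_of_le hjk.le
  have hdet : (0 : ℚ) < ncfDet a j (j + m) := by
    exact_mod_cast (add_le_ncfDet ha j m).trans_lt' (by omega)
  have hj : (0 : ℚ) < ncfDen a j := by exact_mod_cast ncfDen_pos ha j
  have hk : (0 : ℚ) < ncfDen a (j + m) := by exact_mod_cast ncfDen_pos ha _
  have : 0 < ncfConv a j - ncfConv a (j + m) := by rw [ncfConv_sub ha]; positivity
  linarith

theorem isNPath_one_map_ncfConv_iff (s : List ℕ) :
    IsNPath 1 (s.map (ncfConv a)) ↔ s.IsChain fun j k => k = j + 1 := by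
  rw [IsNPath, List.Chain', List.isChain_map]
  refine List.IsChain.iff fun j k => ?_
  have hden : ∀ i, ((ncfConv a i).den : ℚ) = ncfDen a i := fun i => by
    exact_mod_cast den_ncfConv ha i
  have hj : (0 : ℚ) < ncfDen a j := by exact_mod_cast ncfDen_pos ha j
  have hk : (0 : ℚ) < ncfDen a k := by exact_mod_cast ncfDen_pos ha k
  simp only [Nat.lcm_one_left, Nat.cast_one, ncfConv_sub ha, hden]
  constructor
  · rintro ⟨-, h⟩
    rw [div_left_inj' (by positivity)] at h
    exact (ncfDet_eq_one_iff ha).mp (by exact_mod_cast h)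
  · rintro rfl
    exact ⟨ncfConv_strictAnti ha (Nat.lt_succ_self j), by simp [ncfDet_succ]⟩

theorem isShortestNPath_one_ncfConv (n : ℕ) :
    IsShortestNPath 1 (a 0) (ncfConv a n) ((List.range (n + 1)).map (ncfConv a)) := by
  have hpath : IsNPath 1 ((List.range (n + 1)).map (ncfConv a)) :=
    (isNPath_one_map_ncfConv_iff ha _).mpr ((List.isChain_range_succ _ n).mpr fun _ _ => rfl)
  refine ⟨⟨hpath, by rw [List.head?_map, List.range_succ_eq_map]; rfl,
    by simp [List.getLast?_map, List.range_succ]⟩, ?_⟩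
  rintro l' hsub hne ⟨hpath', hhead, hlast⟩
  obtain ⟨s, hs, rfl⟩ := List.sublist_map_iff.mp hsub
  have hinj := Option.map_injective (ncfConv_strictAnti ha).injective
  have hhead0 : s.head? = some 0 := hinj (by rw [← List.head?_map, hhead]; rfl)
  have hlastn : s.getLast? = some n := hinj (by rw [← List.getLast?_map, hlast]; rfl)
  have hs_eq := List.eq_range'_of_isChain_succ ((isNPath_one_map_ncfConv_iff ha s).mp hpath') hhead0
  have hlen : s.length ≤ n + 1 := by simpa using hs.length_le
  have hn : n < s.length := by
    have := List.mem_of_getLast? hlastn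
    rw [hs_eq, List.mem_range'_1] at this
    omega
  apply hne
  rw [hs_eq, show s.length = n + 1 by omega, List.range_eq_range']

end

theorem one_lt_ncfConv {b : ℕ → ℤ} (hb : ∀ i, 2 ≤ b i) (k : ℕ) : 1 < ncfConv b k := by
  induction k generalizing b with
  | zero =>
    show (1 : ℚ) < b 0
    exact_mod_cast one_lt_two.trans_le (hb 0)
  | succ k ih =>
    have h1 := ih fun i => hb (i + 1)
    have h2 : 1 / ncfConv (fun i => b (i + 1)) k < 1 := (div_lt_one (by linarith)).mpr h1
    have h3 : (2 : ℚ) ≤ b 0 := by exact_mod_cast hb 0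
    rw [ncfConv_succ]
    linarith

theorem ceil_ncfConv_succ {a : ℕ → ℤ} (ha : ∀ i, 2 ≤ a (i + 1)) (k : ℕ) :
    ⌈ncfConv a (k + 1)⌉ = a 0 := by
  have h1 := one_lt_ncfConv ha k
  have h2 : 0 < 1 / ncfConv (fun i => a (i + 1)) k := by positivity
  have h3 : 1 / ncfConv (fun i => a (i + 1)) k < 1 := (div_lt_one (by linarith)).mpr h1
  rw [Int.ceil_eq_iff, ncfConv_succ]
  constructor <;> linarith

theorem stmt14_general (a : ℕ → ℤ) (n : ℕ) (ha : ∀ i, 1 ≤ i → i ≤ n → 2 ≤ a i)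
    (y : ℚ) (hy : ncfConv a n = y) (hnotint : y.den ≠ 1) :
    IsShortestNPath 1 ((⌈y⌉ : ℤ) : ℚ) y ((List.range (n + 1)).map (ncfConv a)) := by
  obtain ⟨m, rfl⟩ : ∃ m, n = m + 1 := Nat.exists_eq_succ_of_ne_zero <| by
    rintro rfl
    exact hnotint (hy ▸ Rat.den_intCast (a 0))
  -- Only `a 0, …, a n` enter the convergents, so the later partial quotients may be set to `2`.
  set b : ℕ → ℤ := fun i => if i ≤ m + 1 then a i else 2
  have hb : ∀ i, 2 ≤ b (i + 1) := fun i => by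
    simp only [b]
    split_ifs with h
    exacts [ha _ (Nat.le_add_left 1 i) h, le_rfl]
  have hab : ∀ k ≤ m + 1, ncfConv a k = ncfConv b k := fun k hk =>
    ncfConv_congr fun i hi => (if_pos (hi.trans hk)).symm
  rw [← hy, hab _ le_rfl, ceil_ncfConv_succ hb,
    List.map_congr_left fun k hk => hab k (Nat.lt_succ_iff.mp (List.mem_range.mp hk))]
  exact isShortestNPath_one_ncfConv hb (m + 1)

/-- For a positive rational `y ∉ ℤ` with negative continued
fraction expansion `[a₀, …, aₙ]` (so `a₀ = ⌈y⌉`), the shortest `1`-path from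
`⌈y⌉` to `y` is given by the sequence of successive convergents of the
negative continued fraction expansion of `y`. -/
theorem stmt14 (a : ℕ → ℤ) (n : ℕ) (ha : ∀ i, 1 ≤ i → i ≤ n → 2 ≤ a i)
    (y : ℚ) (hy : ncfConv a n = y) (hpos : 0 < y) (hnotint : y.den ≠ 1) :
    IsShortestNPath 1 ((⌈y⌉ : ℤ) : ℚ) y ((List.range (n + 1)).map (ncfConv a)) :=
  stmt14_general a n ha y hy hnotint
end

section
/- For any rational numbers a > a' ≥ 0 and any positive integer N, there exists a unique shortest N-path from a to a'. -/
/-!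
Multiplying by `N` turns `N`-paths into Farey paths: `x > y` may be consecutive in an `N`-path
iff `N x` and `N y` are Farey neighbours, i.e. `crossDet (N x) (N y) = 1`.

For Farey paths from `x` down to `β`, let `y` be the least Farey neighbour of `x` with `β ≤ y`.
Farey edges do not cross, so every Farey path from `x` to `β` passes through `y`. Replacing `x`
by `y` strictly decreases the positive integer `crossDet x β`, so by induction there is a Farey
path from `x` to `β` that is a sublist of every other one; it is then the unique shortest path.
-/

open List

def crossDet (x y : ℚ) : ℤ := x.num * y.den - y.num * x.den

lemma sub_eq_crossDet_div (x y : ℚ) : x - y = crossDet x y / (x.den * y.den) := by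
  rw [crossDet, eq_div_iff (by positivity)]
  push_cast
  linear_combination (y.den : ℚ) * Rat.mul_den_eq_num x - (x.den : ℚ) * Rat.mul_den_eq_num y

lemma crossDet_pos_iff {x y : ℚ} : 0 < crossDet x y ↔ y < x := by
  rw [← sub_pos (a := x) (b := y), sub_eq_crossDet_div, div_pos_iff_of_pos_right (by positivity)]
  exact_mod_cast Iff.rfl

lemma crossDet_eq_one_iff {x y : ℚ} : crossDet x y = 1 ↔ x - y = 1 / (x.den * y.den) := by
  rw [sub_eq_crossDet_div, div_left_inj' (by positivity)]
  exact_mod_cast Iff.rfl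

lemma crossDet_swap (x y : ℚ) : crossDet y x = -crossDet x y := by
  unfold crossDet; ring

lemma lt_of_crossDet_eq_one {x y : ℚ} (h : crossDet x y = 1) : y < x :=
  crossDet_pos_iff.1 (h ▸ one_pos)

lemma den_mul_crossDet (x y z : ℚ) :
    z.den * crossDet x y = y.den * crossDet x z + x.den * crossDet z y := by
  unfold crossDet; ring

lemma den_add_den_le {x y z : ℚ} (hxy : crossDet x y = 1) (hyz : y < z) (hzx : z < x) :
    x.den + y.den ≤ z.den := by
  have key := den_mul_crossDet x y z
  have hxz := crossDet_pos_iff.2 hzx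
  have hzy := crossDet_pos_iff.2 hyz
  rw [hxy] at key
  zify
  nlinarith

lemma farey_edges_noncrossing {x y v w : ℚ} (hxy : crossDet x y = 1) (hvw : crossDet v w = 1)
    (hwy : w < y) (hyv : y < v) (hvx : v < x) : False := by
  have := den_add_den_le hxy hyv hvx
  have := den_add_den_le hvw hwy hyv
  have := x.pos
  have := w.pos
  omega

lemma le_of_crossDet_eq_one_of_den_le {x y y' : ℚ} (hy : crossDet x y = 1)
    (hy' : crossDet x y' = 1) (h : y.den ≤ y'.den) : y ≤ y' := by
  rw [crossDet_eq_one_iff] at hy hy'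
  have : 1 / ((x.den : ℚ) * y'.den) ≤ 1 / (x.den * y.den) := by gcongr
  linarith

lemma exists_rat_num_den {p q : ℤ} (hq : 0 < q) (h : IsCoprime p q) :
    ∃ y : ℚ, y.num = p ∧ (y.den : ℤ) = q := by
  have hc : p.natAbs.Coprime q.natAbs := Int.isCoprime_iff_gcd_eq_one.1 h
  exact ⟨p / q, Rat.num_div_eq_of_coprime hq hc, Rat.den_div_eq_of_coprime hq hc⟩

lemma exists_crossDet_eq_one_ge {x β : ℚ} (h : β < x) : ∃ y, crossDet x y = 1 ∧ β ≤ y := by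
  obtain ⟨u, w, huw⟩ : IsCoprime x.num x.den := Int.isCoprime_iff_gcd_eq_one.2 x.reduced
  obtain ⟨M, hM⟩ := exists_nat_gt (1 / (x - β))
  have hM0 : (0 : ℚ) < M := (one_div_pos.2 (sub_pos.2 h)).trans hM
  have hden : (1 : ℤ) ≤ x.den := by exact_mod_cast x.pos
  -- Each `(x.num * k - w) / (u + k * x.den)` is a Farey neighbour of `x`; take `k` large.
  set k : ℤ := M + u.natAbs
  have hqM : (M : ℤ) ≤ u + k * x.den := by
    have : k ≤ k * x.den := le_mul_of_one_le_right (by positivity) hden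
    omega
  obtain ⟨y, hyn, hyd⟩ := exists_rat_num_den (p := x.num * k - w) (q := u + k * x.den)
    (by have := Nat.cast_pos.1 hM0; omega) ⟨-x.den, x.num, by linear_combination huw⟩
  have hxy : crossDet x y = 1 := by
    rw [crossDet, hyn, hyd]
    linear_combination huw
  refine ⟨y, hxy, ?_⟩
  have hMy : (M : ℚ) ≤ x.den * y.den := by
    have : (M : ℤ) ≤ x.den * y.den := by
      rw [hyd]
      exact hqM.trans (le_mul_of_one_le_left (by omega) hden)
    exact_mod_cast this
  have : 1 / ((x.den : ℚ) * y.den) < x - β :=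
    (one_div_le_one_div_of_le hM0 hMy).trans_lt ((one_div_lt (sub_pos.2 h) hM0).1 hM)
  linarith [crossDet_eq_one_iff.1 hxy]

lemma exists_isLeast_crossDet_eq_one_ge {x β : ℚ} (h : β < x) :
    ∃ y, IsLeast {y | crossDet x y = 1 ∧ β ≤ y} y := by
  classical
  have hex : ∃ n, ∃ y, (crossDet x y = 1 ∧ β ≤ y) ∧ y.den = n :=
    let ⟨y, hy⟩ := exists_crossDet_eq_one_ge h
    ⟨_, y, hy, rfl⟩
  obtain ⟨y, hy, hyn⟩ := Nat.find_spec hex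
  exact ⟨y, hy, fun y' hy' =>
    le_of_crossDet_eq_one_of_den_le hy.1 hy'.1 (hyn ▸ Nat.find_min' hex ⟨y', hy', rfl⟩)⟩

lemma crossDet_lt_of_isLeast {x y β : ℚ} (hy : IsLeast {y | crossDet x y = 1 ∧ β ≤ y} y)
    (hβy : β < y) : crossDet y β < crossDet x β := by
  obtain ⟨⟨hxy, -⟩, hleast⟩ := hy
  have hxβ : 0 < crossDet x β :=
    crossDet_pos_iff.2 (hβy.trans (lt_of_crossDet_eq_one hxy))
  rcases le_or_gt y.den x.den with hle | hlt
  · have key := den_mul_crossDet x y β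
    rw [hxy, crossDet_swap y β] at key
    have := β.pos
    have : (y.den : ℤ) * crossDet x β ≤ x.den * crossDet x β := by gcongr
    nlinarith [x.pos]
  · obtain ⟨y₂, hn, hd⟩ := exists_rat_num_den (p := y.num - x.num) (q := y.den - x.den)
      (by omega) ⟨-x.den, x.num, by unfold crossDet at hxy; linear_combination hxy⟩
    have hxy₂ : crossDet x y₂ = 1 := by
      unfold crossDet at hxy ⊢
      rw [hn, hd]
      linear_combination hxy
    -- `crossDet y₂ β = crossDet y β - crossDet x β`, and `y₂ < β` by minimality of `y`.
    have hy₂β : y₂ < β := by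
      by_contra! hβy₂
      have := congrArg Rat.den <| le_antisymm
        (le_of_crossDet_eq_one_of_den_le hxy₂ hxy (by omega)) (hleast ⟨hxy₂, hβy₂⟩)
      have := x.pos
      omega
    have := crossDet_pos_iff.2 hy₂β
    unfold crossDet at this ⊢
    rw [hn, hd] at this
    linarith

def IsFareyPathFrom (x y : ℚ) (l : List ℚ) : Prop :=
  l.IsChain (fun p q => crossDet p q = 1) ∧ l.head? = some x ∧ l.getLast? = some y

namespace IsFareyPathFrom

variable {x y z : ℚ} {l : List ℚ}

lemma cons (hl : IsFareyPathFrom y z l) (hxy : crossDet x y = 1) :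
    IsFareyPathFrom x z (x :: l) := by
  obtain ⟨hc, hh, hlast⟩ := hl
  obtain ⟨t, rfl⟩ := head?_eq_some_iff.1 hh
  exact ⟨isChain_cons_cons.2 ⟨hxy, hc⟩, rfl, by rwa [getLast?_cons_cons]⟩

lemma eq_cons (hl : IsFareyPathFrom x z l) (hxz : x ≠ z) :
    ∃ y t, l = x :: t ∧ crossDet x y = 1 ∧ IsFareyPathFrom y z t := by
  obtain ⟨hc, hh, hlast⟩ := hl
  obtain ⟨t, rfl⟩ := head?_eq_some_iff.1 hh
  cases t with
  | nil => exact absurd (by simpa using hlast) hxz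
  | cons y t =>
    rw [isChain_cons_cons] at hc
    exact ⟨y, y :: t, rfl, hc.1, hc.2, rfl, by rwa [getLast?_cons_cons] at hlast⟩

lemma last_le_head (hl : IsFareyPathFrom x z l) : z ≤ x := by
  induction l generalizing x with
  | nil => simp [IsFareyPathFrom] at hl
  | cons a t ih =>
    obtain rfl | hxz := eq_or_ne x z
    · exact le_rfl
    obtain ⟨y, t', he, hxy, ht⟩ := hl.eq_cons hxz
    cases he
    exact (ih ht).trans (lt_of_crossDet_eq_one hxy).le

lemma exists_sublist_from {v : ℚ} (hl : IsFareyPathFrom v z l) (hvx : v < x)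
    (hxy : crossDet x y = 1) (hzy : z ≤ y) (hyv : y ≤ v) :
    ∃ s, IsFareyPathFrom y z s ∧ s.Sublist l := by
  induction l generalizing v with
  | nil => simp [IsFareyPathFrom] at hl
  | cons a t ih =>
    obtain rfl | hyv := hyv.eq_or_lt
    · exact ⟨_, hl, Sublist.refl _⟩
    obtain ⟨w, t', he, hvw, ht⟩ := hl.eq_cons (hzy.trans_lt hyv).ne'
    cases he
    obtain hyw | hwy := le_or_gt y w
    · obtain ⟨s, hs, hst⟩ := ih ht ((lt_of_crossDet_eq_one hvw).trans hvx) hyw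
      exact ⟨s, hs, hst.cons _⟩
    · exact (farey_edges_noncrossing hxy hvw hwy hyv hvx).elim

end IsFareyPathFrom

theorem exists_isFareyPathFrom_forall_sublist {x β : ℚ} (h : β < x) :
    ∃ L, IsFareyPathFrom x β L ∧ ∀ P, IsFareyPathFrom x β P → L.Sublist P := by
  obtain ⟨y, hy⟩ := exists_isLeast_crossDet_eq_one_ge h
  have ⟨⟨hxy, hβy⟩, hleast⟩ := hy
  obtain rfl | hβy := hβy.eq_or_lt
  · refine ⟨[x, β], ⟨isChain_pair.2 hxy, rfl, rfl⟩, fun P hP => ?_⟩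
    obtain ⟨v, t, rfl, -, ht⟩ := hP.eq_cons h.ne'
    exact (singleton_sublist.2 (mem_of_getLast? ht.2.2)).cons_cons x
  · have hdec := crossDet_lt_of_isLeast hy hβy
    have hpos := crossDet_pos_iff.2 hβy
    obtain ⟨L, hL, hLmin⟩ := exists_isFareyPathFrom_forall_sublist hβy
    refine ⟨x :: L, hL.cons hxy, fun P hP => ?_⟩
    obtain ⟨v, t, rfl, hxv, ht⟩ := hP.eq_cons h.ne'
    obtain ⟨s, hs, hst⟩ := ht.exists_sublist_from (lt_of_crossDet_eq_one hxv) hxy hβy.le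
      (hleast ⟨hxv, ht.last_le_head⟩)
    exact ((hLmin s hs).trans hst).cons_cons x
termination_by (crossDet x β).toNat
decreasing_by omega

lemma lcm_den_eq_mul_den_natCast_mul (N : ℕ) (x : ℚ) :
    N.lcm x.den = N * ((N : ℚ) * x).den := by
  have hgcd : (N * x.num).natAbs.gcd x.den = N.gcd x.den := by
    rw [Int.natAbs_mul, Int.natAbs_natCast]
    exact Nat.Coprime.gcd_mul_right_cancel N x.reduced
  rw [Rat.mul_den, Rat.den_natCast, Rat.num_natCast, one_mul, hgcd, Nat.lcm,
    Nat.mul_div_assoc _ (Nat.gcd_dvd_right _ _)]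

lemma nStep_iff_crossDet_mul_eq_one {N : ℕ} (hN : 0 < N) (x y : ℚ) :
    (y < x ∧ x - y = (N : ℚ) / ((Nat.lcm N x.den : ℚ) * (Nat.lcm N y.den : ℚ))) ↔
      crossDet (N * x) (N * y) = 1 := by
  have hN' : (0 : ℚ) < N := by exact_mod_cast hN
  rw [crossDet_eq_one_iff, lcm_den_eq_mul_den_natCast_mul, lcm_den_eq_mul_den_natCast_mul,
    ← mul_sub]
  push_cast
  constructor
  · rintro ⟨-, h⟩
    rw [h]
    field_simp
  · intro h
    have hxy : x - y = 1 / (N * ((N * x).den * (N * y).den)) := by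
      rw [← mul_right_inj' hN'.ne', h]
      field_simp
    refine ⟨sub_pos.1 (hxy ▸ by positivity), ?_⟩
    rw [hxy]
    field_simp

lemma isNPathFrom_iff_isFareyPathFrom_map {N : ℕ} (hN : 0 < N) {a a' : ℚ} {l : List ℚ} :
    IsNPathFrom N a a' l ↔ IsFareyPathFrom (N * a) (N * a') (l.map (N * ·)) := by
  have hinj : Function.Injective (Option.map ((N : ℚ) * ·)) :=
    Option.map_injective (mul_right_injective₀ (by positivity))
  rw [IsNPathFrom, IsFareyPathFrom, IsNPath, Chain', isChain_map, head?_map, getLast?_map,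
    ← Option.map_some, ← Option.map_some, hinj.eq_iff, hinj.eq_iff,
    IsChain.iff (nStep_iff_crossDet_mul_eq_one hN)]

theorem exists_isNPathFrom_forall_sublist {N : ℕ} (hN : 0 < N) {a a' : ℚ} (h : a' < a) :
    ∃ l, IsNPathFrom N a a' l ∧ ∀ P, IsNPathFrom N a a' P → l.Sublist P := by
  have hN' : (0 : ℚ) < N := by exact_mod_cast hN
  obtain ⟨L, hL, hLmin⟩ := exists_isFareyPathFrom_forall_sublist (mul_lt_mul_of_pos_left h hN')
  obtain ⟨l, rfl⟩ : ∃ l, L = l.map (N * ·) :=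
    ⟨L.map (· / N), by simp [Function.comp_def, mul_div_cancel₀ _ hN'.ne']⟩
  refine ⟨l, isNPathFrom_iff_isFareyPathFrom_map hN |>.2 hL, fun P hP => ?_⟩
  obtain ⟨l', hl'P, hl'⟩ :=
    sublist_map_iff.1 (hLmin _ (isNPathFrom_iff_isFareyPathFrom_map hN |>.1 hP))
  rwa [(map_injective_iff.2 (mul_right_injective₀ hN'.ne')) hl']

theorem existsUnique_sublist_minimal_of_forall_sublist {α : Type*} {p : List α → Prop}
    {L : List α} (hL : p L) (hmin : ∀ P, p P → L.Sublist P) :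
    ∃! l, p l ∧ ∀ l', l'.Sublist l → l' ≠ l → ¬ p l' := by
  refine ⟨L, ⟨hL, fun l' hl' hne hp => hne (hl'.antisymm (hmin l' hp))⟩, ?_⟩
  rintro P ⟨hP, hPmin⟩
  by_contra hne
  exact hPmin L (hmin P hP) (Ne.symm hne) hL

theorem stmt15_general (N : ℕ) (hN : 0 < N) (a a' : ℚ) (h : a' < a) :
    ∃! l : List ℚ, IsShortestNPath N a a' l := by
  obtain ⟨l, hl, hmin⟩ := exists_isNPathFrom_forall_sublist hN h
  exact existsUnique_sublist_minimal_of_forall_sublist hl hmin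

/-- For any rational numbers `a > a' ≥ 0` and any positive
integer `N`, there exists a unique shortest `N`-path from `a` to `a'`. -/
theorem stmt15 (N : ℕ) (hN : 0 < N) (a a' : ℚ) (h : a' < a) (h0 : 0 ≤ a') :
    ∃! l : List ℚ, IsShortestNPath N a a' l :=
  stmt15_general N hN a a' h
end

section
/- Let a > a' ≥ 0 be rationals with ⌊a⌋ ≥ ⌈a'⌉. Then the shortest 1-path from a to a' is obtained by concatenating: the shortest 1-path P from a to ⌊a⌋, the integer path Q: ⌊a⌋ > ⌊a⌋−1 > ⋯ > ⌈a'⌉, and the shortest 1-path R from ⌈a'⌉ to a'. -/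
/-!
Consecutive entries `x > y` of a `1`-path are Farey neighbours,
`x - y = 1 / (x.den * y.den)`, and no integer `n` lies strictly between Farey neighbours:
`x - n ≥ 1 / x.den` and `n - y ≥ 1 / y.den` already add up to more than `x - y`. Hence every
`1`-path from `a` to `a'` passes through every integer of `[a', a]`, in particular through
`⌊a⌋` and `⌈a'⌉`. Let `l` be a sub-path of `P ++ Q.tail ++ R.tail` from `a` to `a'`. Its part
down to `⌊a⌋` is a sub-path of `P` and its part from `⌈a'⌉` on is a sub-path of `R`, so by
minimality it contains `P` and `R`; it also contains all of `Q`, hence every entry of the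
concatenation, and so it is the whole list.
-/

theorem Rat.inv_den_le_sub_intCast {q : ℚ} {n : ℤ} (h : (n : ℚ) < q) :
    (q.den : ℚ)⁻¹ ≤ q - n := by
  have hd : (0 : ℚ) < q.den := by positivity
  have hlt : n * (q.den : ℤ) < q.num := by
    have : (n : ℚ) * q.den < q * q.den := mul_lt_mul_of_pos_right h hd
    rw [Rat.mul_den_eq_num] at this
    exact_mod_cast this
  have hle : (n : ℚ) * q.den + 1 ≤ q * q.den := by
    rw [Rat.mul_den_eq_num]; exact_mod_cast hlt
  rw [inv_le_iff_one_le_mul₀' hd]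
  linarith

theorem Rat.inv_den_le_intCast_sub {q : ℚ} {n : ℤ} (h : q < n) :
    (q.den : ℚ)⁻¹ ≤ n - q := by
  have := Rat.inv_den_le_sub_intCast (q := -q) (n := -n) (by push_cast; linarith)
  rw [Rat.den_neg_eq_den] at this
  push_cast at this
  linarith

theorem Rat.intCast_notMem_Ioo_of_sub_eq {x y : ℚ} (hxy : x - y = 1 / (x.den * y.den))
    (n : ℤ) : (n : ℚ) ∉ Set.Ioo y x := by
  rintro ⟨hyn, hnx⟩
  have hx : (1 : ℚ) ≤ x.den := by exact_mod_cast x.pos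
  have hy : (1 : ℚ) ≤ y.den := by exact_mod_cast y.pos
  have key : (x.den : ℚ)⁻¹ + (y.den : ℚ)⁻¹ ≤ 1 / (x.den * y.den) := by
    rw [← hxy]
    linarith [Rat.inv_den_le_sub_intCast hnx, Rat.inv_den_le_intCast_sub hyn]
  rw [inv_add_inv (by positivity) (by positivity), div_le_div_iff_of_pos_right (by positivity)]
    at key
  linarith

namespace List

variable {α : Type*} {l l₁ l₂ : List α}

theorem Sublist.sublist_left_of_forall (p : α → Prop) [DecidablePred p]
    (h : l <+ l₁ ++ l₂) (hl : ∀ x ∈ l, p x) (hl₂ : ∀ x ∈ l₂, ¬ p x) : l <+ l₁ := by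
  have := h.filter (fun x => decide (p x))
  rw [filter_eq_self.2 (by simpa using hl), filter_append,
    filter_eq_nil_iff (l := l₂) |>.2 (by simpa using hl₂), append_nil] at this
  exact this.trans filter_sublist

theorem Sublist.sublist_right_of_forall (p : α → Prop) [DecidablePred p]
    (h : l <+ l₁ ++ l₂) (hl : ∀ x ∈ l, p x) (hl₁ : ∀ x ∈ l₁, ¬ p x) : l <+ l₂ := by
  have := h.filter (fun x => decide (p x))
  rw [filter_eq_self.2 (by simpa using hl), filter_append,
    filter_eq_nil_iff (l := l₁) |>.2 (by simpa using hl₁), nil_append] at this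
  exact this.trans filter_sublist

theorem Sublist.eq_of_subset (h : l₁ <+ l₂) (hnd : l₂.Nodup) (hsub : l₂ ⊆ l₁) :
    l₁ = l₂ :=
  h.eq_of_length_le (hnd.subperm hsub).length_le

end List

section NPath

variable {N : ℕ} {a b c x : ℚ} {l u v : List ℚ}

theorem IsNPath.pairwise (h : IsNPath N l) : l.Pairwise fun x y => y < x :=
  List.isChain_iff_pairwise.mp (List.IsChain.imp (fun _ _ h => h.1) h)

theorem isNPath_append_cons_iff :
    IsNPath N (u ++ b :: v) ↔ IsNPath N (u ++ [b]) ∧ IsNPath N (b :: v) :=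
  List.isChain_split

theorem isNPathFrom_append_cons_iff :
    IsNPathFrom N a c (u ++ b :: v) ↔
      IsNPathFrom N a b (u ++ [b]) ∧ IsNPathFrom N b c (b :: v) := by
  have hhead : (u ++ b :: v).head? = (u ++ [b]).head? := by simp [List.head?_append]
  rw [IsNPathFrom, isNPath_append_cons_iff, hhead, List.getLast?_append_cons]
  simp only [IsNPathFrom, List.getLast?_append, List.getLast?_singleton, List.head?_cons,
    Option.some_or]
  tauto

theorem IsNPathFrom.append_tail {l₁ l₂ : List ℚ} (h₁ : IsNPathFrom N a b l₁)
    (h₂ : IsNPathFrom N b c l₂) : IsNPathFrom N a c (l₁ ++ l₂.tail) := by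
  obtain ⟨u, rfl⟩ := List.getLast?_eq_some_iff.1 h₁.2.2
  obtain ⟨v, rfl⟩ := List.head?_eq_some_iff.1 h₂.2.1
  simpa using isNPathFrom_append_cons_iff.2 ⟨h₁, h₂⟩

theorem IsNPathFrom.eq_cons (h : IsNPathFrom N a b l) : l = a :: l.tail :=
  List.eq_cons_of_mem_head? h.2.1

theorem IsNPathFrom.lt_of_mem_tail (h : IsNPathFrom N a b l) (hx : x ∈ l.tail) : x < a := by
  have hpw := h.1.pairwise
  rw [h.eq_cons] at hpw
  exact List.rel_of_pairwise_cons hpw hx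

theorem IsNPathFrom.mem_Icc (h : IsNPathFrom N a b l) (hx : x ∈ l) : x ∈ Set.Icc b a := by
  constructor
  · obtain ⟨s, rfl⟩ := List.getLast?_eq_some_iff.1 h.2.2
    rcases List.mem_append.1 hx with hx | hx
    · exact (List.pairwise_append.1 h.1.pairwise).2.2 x hx b (by simp) |>.le
    · simp_all
  · rw [h.eq_cons] at hx
    rcases List.mem_cons.1 hx with rfl | hx
    exacts [le_rfl, (h.lt_of_mem_tail hx).le]

theorem IsShortestNPath.subset_of_sublist_append {P M : List ℚ}
    (hP : IsShortestNPath N a b P) (hM : ∀ x ∈ M, x < b) (hl : IsNPathFrom N a c l)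
    (hb : b ∈ l) (hsub : l.Sublist (P ++ M)) : P ⊆ l := by
  obtain ⟨u, v, rfl⟩ := List.append_of_mem hb
  have hu := (isNPathFrom_append_cons_iff.1 hl).1
  have hprefix : (u ++ [b]).Sublist (u ++ b :: v) := by simp
  have huP : (u ++ [b]).Sublist P := (hprefix.trans hsub).sublist_left_of_forall (b ≤ ·)
    (fun x hx => (hu.mem_Icc hx).1) (fun x hx => not_le.2 (hM x hx))
  obtain rfl : u ++ [b] = P := by_contra (hP.2 _ huP · hu)
  intro x hx
  simp only [List.mem_append, List.mem_cons, List.not_mem_nil] at hx ⊢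
  tauto

theorem IsShortestNPath.subset_of_sublist_append_tail {R M : List ℚ}
    (hR : IsShortestNPath N b c R) (hM : ∀ x ∈ M, b ≤ x) (hl : IsNPathFrom N a c l)
    (hb : b ∈ l) (hsub : l.Sublist (M ++ R.tail)) : R ⊆ l := by
  obtain ⟨u, v, rfl⟩ := List.append_of_mem hb
  have hv := (isNPathFrom_append_cons_iff.1 hl).2
  have hsuffix : v.Sublist (u ++ b :: v) := by simp
  have hvR : v.Sublist R.tail := (hsuffix.trans hsub).sublist_right_of_forall (· < b)
    (fun x hx => hv.lt_of_mem_tail hx) (fun x hx => not_lt.2 (hM x hx))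
  have hbvR : (b :: v).Sublist R := hR.1.eq_cons ▸ hvR.cons_cons b
  obtain rfl : b :: v = R := by_contra (hR.2 _ hbvR · hv)
  exact List.subset_append_right _ _

theorem IsNPathFrom.intCast_mem (h : IsNPathFrom 1 a b l) {n : ℤ} (hbn : b ≤ n)
    (hna : n ≤ a) : (n : ℚ) ∈ l := by
  induction l generalizing a with
  | nil => simp [IsNPathFrom] at h
  | cons x t ih =>
    obtain rfl : x = a := by simpa using h.2.1
    rcases hna.eq_or_lt with hn | hn
    · simp [hn]
    cases t with
    | nil =>
      have : b = x := by simpa using h.2.2.symm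
      linarith
    | cons y t =>
      obtain ⟨⟨-, hstep⟩, htail⟩ := List.isChain_cons_cons.1 h.1
      simp only [Nat.lcm_one_left, Nat.cast_one] at hstep
      have hny : (n : ℚ) ≤ y :=
        not_lt.1 fun hyn => Rat.intCast_notMem_Ioo_of_sub_eq hstep n ⟨hyn, hn⟩
      exact List.mem_cons_of_mem _ (ih ⟨htail, rfl, by simpa using h.2.2⟩ hny)

theorem isNPathFrom_one_map_range (m : ℤ) (k : ℕ) :
    IsNPathFrom 1 m ((m - k : ℤ) : ℚ)
      ((List.range (k + 1)).map fun j : ℕ => ((m - j : ℤ) : ℚ)) := by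
  refine ⟨?_, by simp [List.range_succ_eq_map], by simp [List.range_succ]⟩
  refine (List.isChain_map _).2 ((List.isChain_range_succ _ _).2 fun j _ => ⟨?_, ?_⟩)
  · push_cast; linarith
  · simp only [Rat.den_intCast, Nat.lcm_one_left, Nat.cast_one]
    push_cast; ring

end NPath

theorem stmt16_general (a a' : ℚ) (hfc : ⌈a'⌉ ≤ ⌊a⌋)
    (P Q R : List ℚ)
    (hP : IsShortestNPath 1 a ((⌊a⌋ : ℤ) : ℚ) P)
    (hQ : Q = (List.range ((⌊a⌋ - ⌈a'⌉).toNat + 1)).map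
      (fun j : ℕ => ((⌊a⌋ - (j : ℤ) : ℤ) : ℚ)))
    (hR : IsShortestNPath 1 ((⌈a'⌉ : ℤ) : ℚ) a' R) :
    IsShortestNPath 1 a a' (P ++ Q.tail ++ R.tail) := by
  have hQ' : IsNPathFrom 1 (⌊a⌋ : ℚ) (⌈a'⌉ : ℚ) Q := by
    have := isNPathFrom_one_map_range ⌊a⌋ (⌊a⌋ - ⌈a'⌉).toNat
    rwa [Int.toNat_of_nonneg (by omega), sub_sub_cancel, ← hQ] at this
  have hcf : ((⌈a'⌉ : ℤ) : ℚ) ≤ ⌊a⌋ := by exact_mod_cast hfc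
  have hbelow : ∀ x ∈ Q.tail ++ R.tail, x < ⌊a⌋ := by
    simp only [List.mem_append]
    rintro x (hx | hx)
    exacts [hQ'.lt_of_mem_tail hx, (hR.1.lt_of_mem_tail hx).trans_le hcf]
  have habove : ∀ x ∈ P ++ Q.tail, ⌈a'⌉ ≤ x := by
    simp only [List.mem_append]
    rintro x (hx | hx)
    exacts [hcf.trans (hP.1.mem_Icc hx).1, (hQ'.mem_Icc (List.mem_of_mem_tail hx)).1]
  have hL := (hP.1.append_tail hQ').append_tail hR.1
  refine ⟨hL, fun l hsub hne hl => hne (hsub.eq_of_subset hL.1.pairwise.nodup ?_)⟩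
  have hmem (n : ℤ) (h₁ : ⌈a'⌉ ≤ n) (h₂ : n ≤ ⌊a⌋) : (n : ℚ) ∈ l :=
    hl.intCast_mem (Int.ceil_le.1 h₁) (Int.le_floor.1 h₂)
  have hPl : P ⊆ l :=
    hP.subset_of_sublist_append hbelow hl (hmem _ hfc le_rfl) (by simpa using hsub)
  have hQl : Q ⊆ l := by
    rw [hQ]
    intro x hx
    obtain ⟨j, hj, rfl⟩ := List.mem_map.1 hx
    have := List.mem_range.1 hj
    exact hmem _ (by omega) (by omega)
  have hRl : R ⊆ l := hR.subset_of_sublist_append_tail habove hl (hmem _ le_rfl hfc) hsub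
  exact List.append_subset.2
    ⟨List.append_subset.2 ⟨hPl, List.Subset.trans (List.tail_subset Q) hQl⟩,
      List.Subset.trans (List.tail_subset R) hRl⟩

/-- Let `a > a' ≥ 0` be rationals with `⌊a⌋ ≥ ⌈a'⌉`.  Then
the shortest `1`-path from `a` to `a'` is obtained by concatenating: the
shortest `1`-path `P` from `a` to `⌊a⌋`, the integer path
`Q : ⌊a⌋ > ⌊a⌋ − 1 > ⋯ > ⌈a'⌉`, and the shortest `1`-path `R` from `⌈a'⌉` to
`a'` (dropping the repeated entries `⌊a⌋` and `⌈a'⌉` at the junctions). -/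
theorem stmt16 (a a' : ℚ) (h : a' < a) (h0 : 0 ≤ a') (hfc : ⌈a'⌉ ≤ ⌊a⌋)
    (P Q R : List ℚ)
    (hP : IsShortestNPath 1 a ((⌊a⌋ : ℤ) : ℚ) P)
    (hQ : Q = (List.range ((⌊a⌋ - ⌈a'⌉).toNat + 1)).map
      (fun j : ℕ => ((⌊a⌋ - (j : ℤ) : ℤ) : ℚ)))
    (hR : IsShortestNPath 1 ((⌈a'⌉ : ℤ) : ℚ) a' R) :
    IsShortestNPath 1 a a' (P ++ Q.tail ++ R.tail) :=
  stmt16_general a a' hfc P Q R hP hQ hR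
end

section
/- Let v = [v_0, v_1(g_1) = λ_1, …, v_n(g_n) = λ_n] be an inductive (Mac Lane) valuation on K(x), with λ_i = c_i/d_i in lowest terms. Then the multiplicity of the irreducible component of the special fiber corresponding to v in any normal model of P¹_K containing it equals lcm(d_1, …, d_n); equivalently, the normalized value w(π_K) equals lcm(d_1, …, d_n), where w is the rescaling of v having value group ℤ. -/
/-! Write `L = lcm dᵢ`. Since `v(π_K) = 1`, the rescaling factor `m` is a positive integer `M`.
Integrality of `M λᵢ = M cᵢ / dᵢ`, with `cᵢ / dᵢ` in lowest terms, gives `dᵢ ∣ M`, hence `L ∣ M`.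
Conversely all generators `1, cᵢ / dᵢ` of the value group lie in `(1 / L) ℤ`, so an element of
value `1 / M` has value `k / L`, i.e. `M k = L` and `M ∣ L`. -/
theorem Int.natCast_dvd_of_mul_div_eq_intCast {M c z : ℤ} {d : ℕ} (hd : d ≠ 0)
    (hcop : Nat.Coprime c.natAbs d) (h : (M : ℚ) * (c / d) = z) : (d : ℤ) ∣ M := by
  have hMc : M * c = z * d := by
    rw [mul_div_assoc', div_eq_iff (by exact_mod_cast hd)] at h
    exact_mod_cast h
  have hco : IsCoprime (d : ℤ) c := by
    rw [Int.isCoprime_iff_gcd_eq_one]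
    exact Nat.Coprime.symm hcop
  exact hco.dvd_of_dvd_mul_right ⟨z, by rw [hMc, mul_comm]⟩

theorem Rat.intCast_div_natCast_mem_zmultiples_inv {c : ℤ} {d L : ℕ} (hL : L ≠ 0) (hdL : d ∣ L) :
    (c / d : ℚ) ∈ AddSubgroup.zmultiples ((L : ℚ)⁻¹) := by
  obtain ⟨e, rfl⟩ := hdL
  have hd : (d : ℚ) ≠ 0 := by exact_mod_cast left_ne_zero_of_mul hL
  have he : (e : ℚ) ≠ 0 := by exact_mod_cast right_ne_zero_of_mul hL
  refine ⟨c * e, ?_⟩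
  simp only [zsmul_eq_mul]
  push_cast
  field_simp

theorem AddSubgroup.closure_one_union_range_le_zmultiples_inv {ι : Type*} {lam : ι → ℚ}
    {c : ι → ℤ} {d : ι → ℕ} (hlam : ∀ i, lam i = (c i : ℚ) / (d i : ℚ)) {L : ℕ} (hL : L ≠ 0)
    (hdL : ∀ i, d i ∣ L) :
    closure ({1} ∪ Set.range lam) ≤ zmultiples ((L : ℚ)⁻¹) :=
  (closure_le _).2 <| Set.union_subset
    (Set.singleton_subset_iff.2 ⟨L, by simp [hL]⟩)
    (Set.range_subset_iff.2 fun i => hlam i ▸ Rat.intCast_div_natCast_mem_zmultiples_inv hL (hdL i))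

theorem stmt19_general {K : Type*} [Field K] (n : ℕ)
    (g : Fin n → Polynomial K) (lam : Fin n → ℚ) (c : Fin n → ℤ) (d : Fin n → ℕ)
    (hd : ∀ i, 0 < d i) (hlam : ∀ i, lam i = (c i : ℚ) / (d i : ℚ))
    (hcop : ∀ i, Nat.Coprime (c i).natAbs (d i))
    (v : RatFunc K → ℚ) (πK : K) (hπK : πK ≠ 0)
    -- `v` extends `v_K`, normalized by `v(π_K) = 1`
    (hπ : v (RatFunc.C πK) = 1)
    -- the values of `v` on the key polynomials `gᵢ` are the `λᵢ`
    (hg : ∀ i, g i ≠ 0 ∧ v (algebraMap (Polynomial K) (RatFunc K) (g i)) = lam i)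
    -- the value group of `v` is generated by `1, λ₁, …, λₙ`
    (hgroup : ∀ f : RatFunc K, f ≠ 0 →
      v f ∈ AddSubgroup.closure ({1} ∪ Set.range lam)) :
    ∀ m : ℚ, 0 < m →
      (∀ f : RatFunc K, f ≠ 0 → ∃ z : ℤ, m * v f = (z : ℚ)) →
      (∃ f : RatFunc K, f ≠ 0 ∧ m * v f = 1) →
      m * v (RatFunc.C πK) = ((Finset.univ.fold Nat.lcm 1 d : ℕ) : ℚ) := by
  intro m hm hint ⟨f₀, hf₀, hvf₀⟩
  -- `Finset.univ.lcm d` unfolds to this fold, so the `Finset.lcm` API applies to `L`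
  set L := Finset.univ.fold Nat.lcm 1 d
  have hL : L ≠ 0 := Finset.lcm_ne_zero_iff.2 fun i _ => (hd i).ne'
  obtain ⟨M, hM⟩ := hint (RatFunc.C πK) (by simpa using hπK)
  rw [hπ, mul_one] at hM
  lift M to ℕ using by exact_mod_cast hM ▸ hm.le
  subst hM
  have hLM : L ∣ M := Finset.lcm_dvd fun i _ => by
    obtain ⟨z, hz⟩ := hint _ (RatFunc.algebraMap_ne_zero (hg i).1)
    rw [(hg i).2, hlam i] at hz
    exact Int.natCast_dvd_natCast.1 <|
      Int.natCast_dvd_of_mul_div_eq_intCast (hd i).ne' (hcop i) (by exact_mod_cast hz)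
  have hML : M ∣ L := by
    obtain ⟨k, hk⟩ := AddSubgroup.closure_one_union_range_le_zmultiples_inv hlam hL
      (fun i => Finset.dvd_lcm (Finset.mem_univ i)) (hgroup f₀ hf₀)
    rw [← hk] at hvf₀
    simp only [zsmul_eq_mul] at hvf₀
    rw [← mul_assoc, mul_inv_eq_one₀ (by exact_mod_cast hL)] at hvf₀
    exact Int.natCast_dvd_natCast.1 ⟨k, by exact_mod_cast hvf₀.symm⟩
  rw [hπ, mul_one, Nat.dvd_antisymm hML hLM, Int.cast_natCast]

/-- Let `v = [v₀, v₁(g₁) = λ₁, …, vₙ(gₙ) = λₙ]` be an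
inductive (Mac Lane) valuation on `K(x)`, with `λᵢ = cᵢ/dᵢ` in lowest terms.
Then the multiplicity of the irreducible component of the special fiber
corresponding to `v` in any normal model of `P¹_K` equals `lcm(d₁, …, dₙ)`;
equivalently, `w(π_K) = lcm(d₁, …, dₙ)`, where `w` is the rescaling of `v`
having value group `ℤ`.

We encode `v` as a (rank-one, `ℚ`-valued) discrete valuation on the rational
function field `RatFunc K`, normalized so that `v(π_K) = 1`, taking the values
`v(gᵢ) = λᵢ` on the augmenting key polynomials, and whose value group is the
subgroup of `ℚ` generated by `1, λ₁, …, λₙ` (these are the defining properties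
of the inductive valuation used here).  A rescaling of `v` with value group
`ℤ` is a positive multiple `m • v` all of whose values on nonzero elements are
integers, with the value `1` attained; the conclusion is that any such
rescaling sends `π_K` to `lcm(d₁, …, dₙ)`. -/
theorem stmt19 {K : Type*} [Field K] (n : ℕ)
    (g : Fin n → Polynomial K) (lam : Fin n → ℚ) (c : Fin n → ℤ) (d : Fin n → ℕ)
    (hd : ∀ i, 0 < d i) (hlam : ∀ i, lam i = (c i : ℚ) / (d i : ℚ))
    (hcop : ∀ i, Nat.Coprime (c i).natAbs (d i))
    (v : RatFunc K → ℚ) (πK : K) (hπK : πK ≠ 0)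
    (hmul : ∀ f h : RatFunc K, f ≠ 0 → h ≠ 0 → v (f * h) = v f + v h)
    (hadd : ∀ f h : RatFunc K, f ≠ 0 → h ≠ 0 → f + h ≠ 0 →
      min (v f) (v h) ≤ v (f + h))
    -- `v` extends `v_K`, normalized by `v(π_K) = 1`
    (hπ : v (RatFunc.C πK) = 1)
    -- the values of `v` on the key polynomials `gᵢ` are the `λᵢ`
    (hg : ∀ i, g i ≠ 0 ∧ v (algebraMap (Polynomial K) (RatFunc K) (g i)) = lam i)
    -- the value group of `v` is generated by `1, λ₁, …, λₙ`
    (hgroup : ∀ f : RatFunc K, f ≠ 0 →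
      v f ∈ AddSubgroup.closure ({1} ∪ Set.range lam)) :
    ∀ m : ℚ, 0 < m →
      (∀ f : RatFunc K, f ≠ 0 → ∃ z : ℤ, m * v f = (z : ℚ)) →
      (∃ f : RatFunc K, f ≠ 0 ∧ m * v f = 1) →
      m * v (RatFunc.C πK) = ((Finset.univ.fold Nat.lcm 1 d : ℕ) : ℚ) :=
  stmt19_general n g lam c d hd hlam hcop v πK hπK hπ hg hgroup
end
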